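/- Let T: dom T ⊆ H₁ → H₂ be a closed densely defined operator between Hilbert spaces with closed range, and suppose the inverse of T restricted to (ker T)^⊥ is compact. Then the self-adjoint operator |T| = (T*T)^{1/2} restricted to (ker T)^⊥ has compact inverse, and (1+|T|)^{-1} − P_{ker T} is compact; in particular if ker T is finite dimensional then (1+|T|)^{-1} is compact. -/

import Mathlib

/-!
On `(ker T)ᗮ = (ker |T|)ᗮ` every `x` in the domain is recovered as `x = T⁻¹ (T x)` with
`‖T x‖ = ‖|T| x‖`. Both the generalized inverse of `|T|` and `(1 + |T|)⁻¹ - P_{ker T}` send a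
vector `ξ` (from a dense set) to such an `x` with `‖|T| x‖ ≤ C ‖ξ‖`, so they map the unit ball
into the closure of the image of a ball under the compact operator `T⁻¹`.
-/

open scoped InnerProductSpace NNReal

namespace LinearPMap

section Ring

variable {R E F : Type*} [Ring R] [AddCommGroup E] [Module R E] [AddCommGroup F] [Module R F]

def ker (f : E →ₗ.[R] F) : Submodule R E :=
  (LinearMap.ker f.toFun).map f.domain.subtype

theorem mem_ker_iff {f : E →ₗ.[R] F} {x : E} :
    x ∈ f.ker ↔ ∃ y : f.domain, (y : E) = x ∧ f y = 0 := by
  simp only [ker, Submodule.mem_map, LinearMap.mem_ker, Submodule.subtype_apply]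
  exact ⟨fun ⟨y, hy, hyx⟩ => ⟨y, hyx, hy⟩, fun ⟨y, hyx, hy⟩ => ⟨y, hy, hyx⟩⟩

end Ring

theorem isClosed_ker {R E F : Type*} [CommRing R] [AddCommGroup E] [Module R E] [AddCommGroup F]
    [Module R F] [TopologicalSpace E] [TopologicalSpace F] {f : E →ₗ.[R] F}
    (hf : f.IsClosed) : _root_.IsClosed (f.ker : Set E) := by
  have : (f.ker : Set E) = (fun x => (x, (0 : F))) ⁻¹' f.graph := by
    ext x
    simp [mem_ker_iff, mem_graph_iff]
  rw [this]
  exact hf.preimage (continuous_id.prodMk continuous_const)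

end LinearPMap

theorem norm_le_norm_add_of_inner_eq_zero {𝕜 E : Type*} [RCLike 𝕜] [SeminormedAddCommGroup E]
    [InnerProductSpace 𝕜 E] {x y : E} (h : ⟪x, y⟫_𝕜 = 0) : ‖x‖ ≤ ‖x + y‖ :=
  (mul_self_le_mul_self_iff (norm_nonneg _) (norm_nonneg _)).mpr <| by
    rw [norm_add_sq_eq_norm_sq_add_norm_sq_of_inner_eq_zero x y h]
    exact le_add_of_nonneg_right (mul_self_nonneg _)

theorem isCompactOperator_of_dense_of_forall_exists {𝕜 E F G : Type*} [NontriviallyNormedField 𝕜]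
    [NormedAddCommGroup E] [NormedSpace 𝕜 E] [NormedAddCommGroup F] [NormedSpace 𝕜 F]
    [NormedAddCommGroup G] [NormedSpace 𝕜 G] {f : E →L[𝕜] F} {g : G →L[𝕜] F}
    (hg : IsCompactOperator g) {D : Set E} (hD : Dense D) (C : ℝ≥0)
    (h : ∀ ξ ∈ D, ∃ η, ‖η‖ ≤ C * ‖ξ‖ ∧ f ξ = g η) : IsCompactOperator f := by
  refine (isCompactOperator_iff_image_ball_subset_compact (f : E →ₗ[𝕜] F) one_pos).mpr
    ⟨_, hg.isCompact_closure_image_closedBall C, ?_⟩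
  have hD_ball : f '' (Metric.ball 0 1 ∩ D) ⊆ g '' Metric.closedBall 0 C := by
    rintro _ ⟨ξ, ⟨hξ, hξD⟩, rfl⟩
    obtain ⟨η, hη, hfg⟩ := h ξ hξD
    refine ⟨η, mem_closedBall_zero_iff.mpr (hη.trans ?_), hfg.symm⟩
    exact mul_le_of_le_one_right C.2 (mem_ball_zero_iff.mp hξ).le
  calc (f : E →ₗ[𝕜] F) '' Metric.ball 0 1 ⊆ f '' closure (Metric.ball 0 1 ∩ D) :=
        Set.image_mono (hD.open_subset_closure_inter Metric.isOpen_ball)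
    _ ⊆ closure (f '' (Metric.ball 0 1 ∩ D)) := image_closure_subset_closure_image f.continuous
    _ ⊆ closure (g '' Metric.closedBall 0 C) := closure_mono hD_ball

section InnerProduct

variable {𝕜 E F : Type*} [RCLike 𝕜] [NormedAddCommGroup E] [InnerProductSpace 𝕜 E]
  [NormedAddCommGroup F] [InnerProductSpace 𝕜 F]

theorem Submodule.dense_sup_orthogonal [CompleteSpace E] (K : Submodule 𝕜 E) :
    Dense ((K ⊔ Kᗮ : Submodule 𝕜 E) : Set E) := by
  rw [Submodule.dense_iff_topologicalClosure_eq_top, Submodule.topologicalClosure_eq_top_iff,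
    ← Submodule.inf_orthogonal, Submodule.inf_orthogonal_eq_bot]

theorem Submodule.isCompactOperator_starProjection (K : Submodule 𝕜 E) [FiniteDimensional 𝕜 K] :
    IsCompactOperator K.starProjection :=
  ((isCompactOperator_id_iff_finiteDimensional (E := K)).mpr ‹_› |>.comp_clm
    K.orthogonalProjectionOnto).clm_comp K.subtypeL

namespace LinearPMap

theorem IsFormalAdjoint.range_le_orthogonal_ker {A : E →ₗ.[𝕜] F} {B : F →ₗ.[𝕜] E}
    (h : A.IsFormalAdjoint B) : LinearMap.range B.toFun ≤ A.kerᗮ := by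
  rintro _ ⟨y, rfl⟩
  rw [Submodule.mem_orthogonal]
  intro _ hx
  obtain ⟨x, rfl, hx0⟩ := mem_ker_iff.mp hx
  change ⟪(x : E), B y⟫_𝕜 = 0
  rw [← h x y, hx0, inner_zero_left]

theorem exists_mem_orthogonal_ker (f : E →ₗ.[𝕜] F) [f.ker.HasOrthogonalProjection]
    (x : f.domain) : ∃ x' : f.domain, (x' : E) ∈ f.kerᗮ ∧ f x' = f x ∧ (x : E) - x' ∈ f.ker := by
  obtain ⟨z, hz, hz0⟩ := mem_ker_iff.mp (f.ker.starProjection_apply_mem x)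
  refine ⟨x - z, ?_, by rw [map_sub, hz0, sub_zero], ?_⟩
  · simpa only [Submodule.coe_sub, hz] using f.ker.sub_starProjection_mem_orthogonal (x : E)
  · simpa only [Submodule.coe_sub, sub_sub_cancel, hz] using f.ker.starProjection_apply_mem (x : E)

end LinearPMap

section Factorization

variable {S : E →ₗ.[𝕜] E} [S.ker.HasOrthogonalProjection] {Tinv : F →L[𝕜] E}
  (hTinv : IsCompactOperator Tinv)
  (hfac : ∀ x : S.domain, (x : E) ∈ S.kerᗮ → ∃ η, ‖η‖ ≤ ‖S x‖ ∧ Tinv η = x)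
include hTinv hfac

theorem isCompactOperator_of_leftInverse_on_orthogonal_ker [CompleteSpace E] (Sinv : E →L[𝕜] E)
    (hleft : ∀ x : S.domain, (x : E) ∈ S.kerᗮ → Sinv (S x) = x)
    (hzero : ∀ ξ ∈ (LinearMap.range S.toFun)ᗮ, Sinv ξ = 0) : IsCompactOperator Sinv := by
  refine isCompactOperator_of_dense_of_forall_exists hTinv
    (LinearMap.range S.toFun).dense_sup_orthogonal 1 fun ξ hξ => ?_
  obtain ⟨_, ⟨x, rfl⟩, ζ, hζ, rfl⟩ := Submodule.mem_sup.mp hξ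
  obtain ⟨x', hx', hSx', -⟩ := S.exists_mem_orthogonal_ker x
  obtain ⟨η, hη, hx'η⟩ := hfac x' hx'
  refine ⟨η, ?_, ?_⟩
  · calc ‖η‖ ≤ ‖S x'‖ := hη
      _ ≤ 1 * ‖S x + ζ‖ := by
        rw [one_mul, hSx']
        exact norm_le_norm_add_of_inner_eq_zero
          ((LinearMap.range S.toFun).inner_right_of_mem_orthogonal ⟨x, rfl⟩ hζ)
  · rw [map_add, hzero ζ hζ, add_zero, hx'η]
    exact (congrArg Sinv hSx').symm.trans (hleft x' hx')

theorem isCompactOperator_resolvent_sub_projection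
    (hrange : LinearMap.range S.toFun ≤ S.kerᗮ) (R P : E →L[𝕜] E)
    (hR : ∀ x : S.domain, R (x + S x) = x) (hRsurj : ∀ y, ∃ x : S.domain, (x : E) + S x = y)
    (hP₁ : ∀ ξ ∈ S.ker, P ξ = ξ) (hP₀ : ∀ ξ ∈ S.kerᗮ, P ξ = 0) :
    IsCompactOperator (R - P) := by
  refine isCompactOperator_of_dense_of_forall_exists hTinv dense_univ (1 + ‖R‖₊) fun ξ _ => ?_
  obtain ⟨x, rfl⟩ := hRsurj ξ
  obtain ⟨x', hx', hSx', hxx'⟩ := S.exists_mem_orthogonal_ker x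
  obtain ⟨η, hη, hx'η⟩ := hfac x' hx'
  refine ⟨η, ?_, ?_⟩
  · calc ‖η‖ ≤ ‖S x'‖ := hη
      _ = ‖(x + S x) - R (x + S x)‖ := by rw [hSx', hR, add_sub_cancel_left]
      _ ≤ ‖x + S x‖ + ‖R‖ * ‖x + S x‖ := (norm_sub_le _ _).trans (by gcongr; exact R.le_opNorm _)
      _ = (1 + ‖R‖₊) * ‖x + S x‖ := by push_cast; ring
  · -- `(R - P) (x + S x)` is the component `x'` of `x` orthogonal to `ker S`.
    have hPx : P x = x - x' := calc
      P x = P ((x - x') + x') := by rw [sub_add_cancel]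
      _ = x - x' := by rw [map_add, hP₁ _ hxx', hP₀ _ hx', add_zero]
    rw [sub_apply, hR, map_add, hP₀ (S x) (hrange ⟨x, rfl⟩), add_zero, hPx,
      sub_sub_cancel, hx'η]

theorem isCompactOperator_resolvent_of_finiteDimensional_ker [FiniteDimensional 𝕜 S.ker]
    (hrange : LinearMap.range S.toFun ≤ S.kerᗮ) (R : E →L[𝕜] E)
    (hR : ∀ x : S.domain, R (x + S x) = x) (hRsurj : ∀ y, ∃ x : S.domain, (x : E) + S x = y) :
    IsCompactOperator R := by
  have hRP := isCompactOperator_resolvent_sub_projection hTinv hfac hrange R S.ker.starProjection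
    hR hRsurj (fun _ => S.ker.starProjection_eq_self_iff.mpr)
    (fun _ => S.ker.starProjection_apply_eq_zero_iff.mpr)
  simpa using hRP.add S.ker.isCompactOperator_starProjection

end Factorization

end InnerProduct

theorem stmt_15_general {H₁ H₂ : Type*} [NormedAddCommGroup H₁] [InnerProductSpace ℂ H₁]
    [CompleteSpace H₁] [NormedAddCommGroup H₂] [InnerProductSpace ℂ H₂]
    (T : H₁ →ₗ.[ℂ] H₂) (hclosedT : T.IsClosed)
    (Tinv : H₂ →L[ℂ] H₁) (hTinvC : IsCompactOperator ⇑Tinv)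
    (hTinv : ∀ x : T.domain,
      (x : H₁) ∈ ((LinearMap.ker T.toFun).map T.domain.subtype)ᗮ → Tinv (T x) = x)
    (S : H₁ →ₗ.[ℂ] H₁) (hdenseS : Dense (S.domain : Set H₁))
    (hSsa : LinearPMap.adjoint S = S) (hdom : S.domain = T.domain)
    (hnorm : ∀ (x : H₁) (hx : x ∈ S.domain) (hx' : x ∈ T.domain),
      ‖S ⟨x, hx⟩‖ = ‖T ⟨x, hx'⟩‖)
    (hkerS : (LinearMap.ker S.toFun).map S.domain.subtype =
      (LinearMap.ker T.toFun).map T.domain.subtype) :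
    (∀ Sinv : H₁ →L[ℂ] H₁,
      (∀ x : S.domain,
        (x : H₁) ∈ ((LinearMap.ker S.toFun).map S.domain.subtype)ᗮ → Sinv (S x) = x) →
      (∀ ξ ∈ (LinearMap.range S.toFun)ᗮ, Sinv ξ = 0) →
      (∀ ξ, Sinv ξ ∈ ((LinearMap.ker S.toFun).map S.domain.subtype)ᗮ) →
      IsCompactOperator ⇑Sinv) ∧
    (∀ R Pk : H₁ →L[ℂ] H₁,
      (∀ x : S.domain, R ((x : H₁) + S x) = x) →
      (∀ y : H₁, ∃ x : S.domain, (x : H₁) + S x = y) →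
      (∀ ξ ∈ (LinearMap.ker S.toFun).map S.domain.subtype, Pk ξ = ξ) →
      (∀ ξ ∈ ((LinearMap.ker S.toFun).map S.domain.subtype)ᗮ, Pk ξ = 0) →
      IsCompactOperator ⇑(R - Pk)) ∧
    (FiniteDimensional ℂ ((LinearMap.ker T.toFun).map T.domain.subtype) →
      ∀ R : H₁ →L[ℂ] H₁,
        (∀ x : S.domain, R ((x : H₁) + S x) = x) →
        (∀ y : H₁, ∃ x : S.domain, (x : H₁) + S x = y) →
        IsCompactOperator ⇑R) := by
  have hker : S.ker = T.ker := hkerS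
  have : CompleteSpace S.ker := (hker ▸ T.isClosed_ker hclosedT).completeSpace_coe
  have hrange : LinearMap.range S.toFun ≤ S.kerᗮ :=
    (hSsa ▸ S.adjoint_isFormalAdjoint hdenseS).range_le_orthogonal_ker
  have hfac (x : S.domain) (hx : (x : H₁) ∈ S.kerᗮ) : ∃ η, ‖η‖ ≤ ‖S x‖ ∧ Tinv η = x :=
    ⟨T ⟨x, hdom ▸ x.2⟩, (hnorm x x.2 _).ge, hTinv _ (hker ▸ hx : (x : H₁) ∈ T.kerᗮ)⟩
  refine ⟨fun Sinv hleft hzero _ =>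
      isCompactOperator_of_leftInverse_on_orthogonal_ker hTinvC hfac Sinv hleft hzero,
    isCompactOperator_resolvent_sub_projection hTinvC hfac hrange, fun hfin => ?_⟩
  have : FiniteDimensional ℂ S.ker := hker ▸ hfin
  exact isCompactOperator_resolvent_of_finiteDimensional_ker hTinvC hfac hrange

/-- Let `T` be a closed densely defined operator between Hilbert spaces with closed range
whose inverse on the support `(ker T)ᗮ` is compact, and let `S = |T| = (T*T)^{1/2}` be the
self-adjoint operator with the same domain, the same kernel and `‖Sx‖ = ‖Tx‖`.  Then:
(a) the (generalized) inverse of `S` on `(ker S)ᗮ` is compact;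
(b) `(1+S)⁻¹ − P_{ker S}` is compact;
(c) if `ker T` is finite dimensional then `(1+S)⁻¹` is compact. -/
theorem stmt_15 {H₁ H₂ : Type*} [NormedAddCommGroup H₁] [InnerProductSpace ℂ H₁]
    [CompleteSpace H₁] [NormedAddCommGroup H₂] [InnerProductSpace ℂ H₂]
    [CompleteSpace H₂]
    (T : H₁ →ₗ.[ℂ] H₂) (hdenseT : Dense (T.domain : Set H₁)) (hclosedT : T.IsClosed)
    (hrangeT : IsClosed ((LinearMap.range T.toFun : Submodule ℂ H₂) : Set H₂))
    (Tinv : H₂ →L[ℂ] H₁) (hTinvC : IsCompactOperator ⇑Tinv)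
    (hTinv : ∀ x : T.domain,
      (x : H₁) ∈ ((LinearMap.ker T.toFun).map T.domain.subtype)ᗮ → Tinv (T x) = x)
    (S : H₁ →ₗ.[ℂ] H₁) (hdenseS : Dense (S.domain : Set H₁))
    (hSsa : LinearPMap.adjoint S = S) (hdom : S.domain = T.domain)
    (hnorm : ∀ (x : H₁) (hx : x ∈ S.domain) (hx' : x ∈ T.domain),
      ‖S ⟨x, hx⟩‖ = ‖T ⟨x, hx'⟩‖)
    (hkerS : (LinearMap.ker S.toFun).map S.domain.subtype =
      (LinearMap.ker T.toFun).map T.domain.subtype) :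
    (∀ Sinv : H₁ →L[ℂ] H₁,
      (∀ x : S.domain,
        (x : H₁) ∈ ((LinearMap.ker S.toFun).map S.domain.subtype)ᗮ → Sinv (S x) = x) →
      (∀ ξ ∈ (LinearMap.range S.toFun)ᗮ, Sinv ξ = 0) →
      (∀ ξ, Sinv ξ ∈ ((LinearMap.ker S.toFun).map S.domain.subtype)ᗮ) →
      IsCompactOperator ⇑Sinv) ∧
    (∀ R Pk : H₁ →L[ℂ] H₁,
      (∀ x : S.domain, R ((x : H₁) + S x) = x) →
      (∀ y : H₁, ∃ x : S.domain, (x : H₁) + S x = y) →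
      (∀ ξ ∈ (LinearMap.ker S.toFun).map S.domain.subtype, Pk ξ = ξ) →
      (∀ ξ ∈ ((LinearMap.ker S.toFun).map S.domain.subtype)ᗮ, Pk ξ = 0) →
      IsCompactOperator ⇑(R - Pk)) ∧
    (FiniteDimensional ℂ ((LinearMap.ker T.toFun).map T.domain.subtype) →
      ∀ R : H₁ →L[ℂ] H₁,
        (∀ x : S.domain, R ((x : H₁) + S x) = x) →
        (∀ y : H₁, ∃ x : S.domain, (x : H₁) + S x = y) →
        IsCompactOperator ⇑R) :=
  stmt_15_general T hclosedT Tinv hTinvC hTinv S hdenseS hSsa hdom hnorm hkerS
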